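/- arXiv:2509.07398 — 2 statements merged into one kernel-verified Lean document; each statement's English description precedes it below -/
import Mathlib

section
/- In a Riesz space (lattice-ordered vector space), for any finite family f₁, ..., fₙ, the join satisfies the inclusion–exclusion identity: ⋁ᵢ fᵢ = Σ_{∅≠J⊆{1,...,n}} (−1)^{|J|+1} ⋀_{j∈J} fⱼ. -/
open Finset

private def infOrZero {ι E : Type*} [Lattice E] [AddCommGroup E]
    (f : ι → E) (J : Finset ι) : E :=
  if h : J.Nonempty then J.inf' h f else 0

private lemma inf'_inf_const {ι E : Type*} [Lattice E] {s : Finset ι} (hs : s.Nonempty)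
    (f : ι → E) (a : E) : (s.inf' hs fun i => a ⊓ f i) = a ⊓ s.inf' hs f := by
  induction hs using Finset.Nonempty.cons_induction with
  | singleton => simp
  | cons b t hb ht ih =>
      rw [inf'_cons ht, inf'_cons ht, ih]
      exact (inf_inf_distrib_left _ _ _).symm

private lemma aux {ι E : Type*} [DecidableEq ι] [Lattice E] [AddCommGroup E]
    [CovariantClass E E (· + ·) (· ≤ ·)]
    {s : Finset ι} (hs : s.Nonempty) (f : ι → E) :
    s.sup' hs f = ∑ J ∈ s.powerset, ((-1 : ℤ) ^ (J.card + 1)) • infOrZero f J := by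
  induction hs using Finset.Nonempty.cons_induction generalizing f with
  | singleton a =>
      have : ({a} : Finset ι).powerset = {∅, {a}} := by
        ext J
        simp [Finset.subset_singleton_iff]
      rw [this, Finset.sum_insert (by exact fun h => absurd ((Finset.mem_singleton).mp h).symm (Finset.singleton_ne_empty a))]
      simp [infOrZero]
  | cons a t ha ht ih =>
      rw [sup'_cons ht]
      have hps : (cons a t ha).powerset = (insert a t).powerset := by
        rw [cons_eq_insert]
      rw [hps, Finset.sum_powerset_insert ha, ← ih f]
      have hd : t.sup' ht (fun i => f a ⊓ f i) = f a ⊓ t.sup' ht f := by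
        letI : DistribLattice E := AddCommGroup.toDistribLattice E
        exact (sup'_inf_distrib_left ht f (f a)).symm
      have key : ∑ J ∈ t.powerset, ((-1 : ℤ) ^ ((insert a J).card + 1)) •
          infOrZero f (insert a J)
          = f a - (f a ⊓ t.sup' ht f) := by
        have hterm : ∀ J ∈ t.powerset, ((-1 : ℤ) ^ ((insert a J).card + 1)) •
            infOrZero f (insert a J)
            = -(((-1 : ℤ) ^ (J.card + 1)) • infOrZero (fun i => f a ⊓ f i) J)
              + (if J = (∅ : Finset ι) then f a else 0) := by
          intro J hJ
          have haJ : a ∉ J := fun h => ha (mem_powerset.mp hJ h)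
          rw [card_insert_of_notMem haJ]
          rcases J.eq_empty_or_nonempty with rfl | hne
          · simp [infOrZero]
          · have hJne : J ≠ ∅ := hne.ne_empty
            rw [if_neg hJne]
            have h1 : infOrZero f (insert a J) = f a ⊓ J.inf' hne f := by
              rw [infOrZero, dif_pos (insert_nonempty a J)]
              exact inf'_insert hne f
            have h2 : infOrZero (fun i => f a ⊓ f i) J = f a ⊓ J.inf' hne f := by
              rw [infOrZero, dif_pos hne]
              exact inf'_inf_const hne f (f a)
            rw [h1, h2, add_zero, pow_succ _ (#J + 1), mul_neg_one, neg_smul]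
        rw [Finset.sum_congr rfl hterm, Finset.sum_add_distrib, Finset.sum_neg_distrib,
          ← ih (fun i => f a ⊓ f i), hd, Finset.sum_ite_eq' t.powerset (∅ : Finset ι)
            (fun _ => f a), if_pos (empty_mem_powerset t)]
        abel
      rw [key]
      have hS : f a ⊔ t.sup' ht f = f a + t.sup' ht f - (f a ⊓ t.sup' ht f) := by
        rw [← inf_add_sup (f a) (t.sup' ht f)]; abel
      rw [hS]; abel

open Finset in
theorem stmt_1 {E : Type*} [Lattice E] [AddCommGroup E]
    [CovariantClass E E (· + ·) (· ≤ ·)]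
    (n : ℕ) (hn : 1 ≤ n) (f : Fin n → E) :
    univ.sup' (univ_nonempty_iff.mpr (Fin.pos_iff_nonempty.mp hn)) f =
      ∑ J ∈ (univ.powerset.filter Finset.Nonempty).attach,
        ((-1 : ℤ) ^ (J.1.card + 1)) •
          J.1.inf' ((Finset.mem_filter.mp J.2).2) f := by
  have h1 : ∀ J : {x // x ∈ (univ.powerset.filter Finset.Nonempty : Finset (Finset (Fin n)))},
      ((-1 : ℤ) ^ (J.1.card + 1)) • J.1.inf' ((Finset.mem_filter.mp J.2).2) f
      = ((-1 : ℤ) ^ (J.1.card + 1)) • infOrZero f J.1 := by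
    intro J
    rw [infOrZero, dif_pos ((Finset.mem_filter.mp J.2).2)]
  rw [Finset.sum_congr rfl fun J _ => h1 J,
    Finset.sum_attach _ (fun J => ((-1 : ℤ) ^ (J.card + 1)) • infOrZero f J)]
  rw [Finset.sum_filter_of_ne (fun J _ h => by
    by_contra hne
    rw [not_nonempty_iff_eq_empty] at hne
    subst hne
    simp [infOrZero] at h)]
  exact aux _ f
end

section
/- Let K be a compact convex subset of a locally convex topological vector space, and let B ⊆ A(K) be a linear subspace of the space of continuous affine real-valued functions on K that contains the constants and separates points of K. Then B is dense in A(K) with respect to the uniform norm. -/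
open Filter Set Topology

theorem dual_pi_finite {ι : Type*} [DecidableEq ι] (ℓ : ((ι → ℝ) →L[ℝ] ℝ)) :
    ∃ I : Finset ι, ∀ p : ι → ℝ, ℓ p = ∑ i ∈ I, ℓ (Pi.single i 1) * p i := by
  have hU : ℓ ⁻¹' Set.Ioo (-1 : ℝ) 1 ∈ 𝓝 (0 : ι → ℝ) := by
    have : Set.Ioo (-1 : ℝ) 1 ∈ 𝓝 (ℓ 0) := by
      rw [map_zero]
      exact Ioo_mem_nhds (by norm_num) (by norm_num)
    exact ℓ.continuous.continuousAt.preimage_mem_nhds this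
  rw [nhds_pi] at hU
  obtain ⟨I, t, ht, hsub⟩ := Filter.mem_pi'.mp hU
  have h0 : ∀ q : ι → ℝ, (∀ i ∈ I, q i = 0) → ℓ q = 0 := by
    intro q hq
    by_contra hne
    have hc : ∀ c : ℝ, c * ℓ q < 1 := by
      intro c
      have hmem : c • q ∈ (I : Set ι).pi t := by
        intro i hi
        have : (c • q) i = 0 := by simp [hq i hi]
        rw [this]
        exact mem_of_mem_nhds (ht i)
      have := hsub hmem
      simpa [map_smul, smul_eq_mul] using this.2
    have := hc (2 / ℓ q)
    rw [div_mul_cancel₀ _ hne] at this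
    norm_num at this
  refine ⟨I, fun p => ?_⟩
  have hdecomp : p = (∑ i ∈ I, p i • (Pi.single i (1 : ℝ) : ι → ℝ))
      + fun j => if j ∈ I then 0 else p j := by
    funext j
    simp only [Finset.sum_apply, Pi.add_apply, Pi.smul_apply, Pi.single_apply, smul_eq_mul,
      mul_ite, mul_one, mul_zero]
    rw [Finset.sum_ite_eq I j p]
    by_cases hj : j ∈ I <;> simp [hj]
  calc ℓ p = ℓ (∑ i ∈ I, p i • (Pi.single i (1 : ℝ) : ι → ℝ))
        + ℓ (fun j => if j ∈ I then 0 else p j) := by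
        rw [← map_add, ← hdecomp]
    _ = ∑ i ∈ I, ℓ (Pi.single i 1) * p i := by
        rw [show ℓ (fun j => if j ∈ I then 0 else p j) = 0 from
          h0 _ (fun i hi => by simp [hi]), add_zero, map_sum]
        exact Finset.sum_congr rfl fun i _ => by rw [map_smul, smul_eq_mul, mul_comm]

theorem stmt_19 {V : Type*} [AddCommGroup V] [Module ℝ V] [TopologicalSpace V]
    [IsTopologicalAddGroup V] [ContinuousSMul ℝ V] [LocallyConvexSpace ℝ V]
    (K : Set V) (hK : IsCompact K) (hKconv : Convex ℝ K)
    (B : Submodule ℝ C(K, ℝ))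
    (hB_affine : ∀ f ∈ B, ∀ (p q : K) (t : ℝ), 0 ≤ t → t ≤ 1 →
      ∀ h : t • (p : V) + (1 - t) • (q : V) ∈ K,
        f ⟨t • (p : V) + (1 - t) • (q : V), h⟩ = t * f p + (1 - t) * f q)
    (hB_const : (1 : C(K, ℝ)) ∈ B)
    (hB_sep : ∀ p q : K, p ≠ q → ∃ f ∈ B, f p ≠ f q) :
    ∀ f : C(K, ℝ),
      (∀ (p q : K) (t : ℝ), 0 ≤ t → t ≤ 1 →
        ∀ h : t • (p : V) + (1 - t) • (q : V) ∈ K,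
          f ⟨t • (p : V) + (1 - t) • (q : V), h⟩ = t * f p + (1 - t) * f q) →
      ∀ ε : ℝ, 0 < ε → ∃ g ∈ B, ∀ x : K, |f x - g x| ≤ ε := by
  classical
  intro f hf ε hε
  by_cases hne : Nonempty K
  case neg => exact ⟨0, B.zero_mem, fun x => absurd ⟨x⟩ hne⟩
  -- affine helper with symmetric coefficients
  have haff : ∀ (g : C(K, ℝ)), (∀ (p q : K) (t : ℝ), 0 ≤ t → t ≤ 1 →
      ∀ h : t • (p : V) + (1 - t) • (q : V) ∈ K,
        g ⟨t • (p : V) + (1 - t) • (q : V), h⟩ = t * g p + (1 - t) * g q) →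
      ∀ (p q : K) (a b : ℝ), 0 ≤ a → 0 ≤ b → a + b = 1 →
      ∀ h : a • (p : V) + b • (q : V) ∈ K,
        g ⟨a • (p : V) + b • (q : V), h⟩ = a * g p + b * g q := by
    intro g hg p q a b ha hb hab h
    have hb' : b = 1 - a := by linarith
    subst hb'
    exact hg p q a ha (by linarith) h
  haveI : CompactSpace K := isCompact_iff_compactSpace.mp hK
  -- embedding into ℝ^B
  let Φ : K → (B → ℝ) := fun x b => (b : C(K, ℝ)) x
  have hΦcont : Continuous Φ := continuous_pi fun b => (b : C(K, ℝ)).continuous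
  have hΦinj : Function.Injective Φ := by
    intro x y hxy
    by_contra hxyne
    obtain ⟨g, hgB, hgne⟩ := hB_sep x y hxyne
    exact hgne (congrFun hxy ⟨g, hgB⟩)
  -- shifted graphs
  let Ψ : ℝ → K → ((B → ℝ) × ℝ) := fun c x => (Φ x, f x + c)
  have hΨcont : ∀ c, Continuous (Ψ c) :=
    fun c => hΦcont.prodMk (f.continuous.add continuous_const)
  have hcpt : ∀ c, IsCompact (Set.range (Ψ c)) := fun c => isCompact_range (hΨcont c)
  have hcvx : ∀ c, Convex ℝ (Set.range (Ψ c)) := by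
    intro c
    rintro _ ⟨p, rfl⟩ _ ⟨q, rfl⟩ a b ha hb hab
    have hmem : a • (p : V) + b • (q : V) ∈ K := hKconv p.2 q.2 ha hb hab
    refine ⟨⟨_, hmem⟩, ?_⟩
    have h2 : f (⟨a • (p : V) + b • (q : V), hmem⟩ : K) = a * f p + b * f q :=
      haff f hf p q a b ha hb hab hmem
    apply Prod.ext
    · funext g
      have h1 : (g : C(K, ℝ)) (⟨a • (p : V) + b • (q : V), hmem⟩ : K)
          = a * (g : C(K, ℝ)) p + b * (g : C(K, ℝ)) q :=
        haff (g : C(K, ℝ)) (hB_affine g g.2) p q a b ha hb hab hmem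
      show Φ _ g = (a • Ψ c p + b • Ψ c q).1 g
      simp only [Ψ, Φ, Prod.fst_add, Prod.smul_fst, Pi.add_apply, Pi.smul_apply, smul_eq_mul]
      exact h1
    · show f _ + c = (a • Ψ c p + b • Ψ c q).2
      simp only [Ψ, Prod.snd_add, Prod.smul_snd, smul_eq_mul]
      rw [h2]
      linear_combination -c * hab
  have hdisj : Disjoint (Set.range (Ψ (-ε))) (Set.range (Ψ ε)) := by
    rw [Set.disjoint_left]
    rintro _ ⟨x, rfl⟩ ⟨y, hy⟩
    have h1 : Φ y = Φ x := congrArg Prod.fst hy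
    have h2 : f y + ε = f x + -ε := congrArg Prod.snd hy
    cases hΦinj h1
    linarith
  obtain ⟨L, u, v, hLu, huv, hLv⟩ :=
    geometric_hahn_banach_compact_closed (hcvx (-ε)) (hcpt (-ε)) (hcvx ε)
      (hcpt ε).isClosed hdisj
  obtain ⟨x₀⟩ := hne
  let ℓ : ((B → ℝ) →L[ℝ] ℝ) := L.comp (ContinuousLinearMap.inl ℝ (B → ℝ) ℝ)
  set a : ℝ := L (0, 1) with ha_def
  have hL_split : ∀ (p : B → ℝ) (t : ℝ), L (p, t) = ℓ p + t * a := by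
    intro p t
    have hpt : (p, t) = ((p, (0 : ℝ)) : (B → ℝ) × ℝ) + t • ((0 : B → ℝ), (1 : ℝ)) := by
      simp [Prod.ext_iff]
    rw [hpt, map_add, map_smul, smul_eq_mul]
    rfl
  have h1 : ℓ (Φ x₀) + (f x₀ + -ε) * a < u := by
    have := hLu _ (Set.mem_range_self (f := Ψ (-ε)) x₀)
    rwa [show Ψ (-ε) x₀ = (Φ x₀, f x₀ + -ε) from rfl, hL_split] at this
  have h2 : v < ℓ (Φ x₀) + (f x₀ + ε) * a := by
    have := hLv _ (Set.mem_range_self (f := Ψ ε) x₀)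
    rwa [show Ψ ε x₀ = (Φ x₀, f x₀ + ε) from rfl, hL_split] at this
  have ha : 0 < a := by nlinarith
  obtain ⟨I, hI⟩ := dual_pi_finite ℓ
  let b₀ : B := (u / a) • (⟨1, hB_const⟩ : B)
      - a⁻¹ • ∑ i ∈ I, (ℓ (Pi.single i 1)) • i
  refine ⟨(b₀ : C(K, ℝ)), b₀.2, ?_⟩
  intro x
  have key : (b₀ : C(K, ℝ)) x = (u - ℓ (Φ x)) / a := by
    have hcoe : (b₀ : C(K, ℝ)) x
        = (u / a) * 1 - a⁻¹ * ∑ i ∈ I, ℓ (Pi.single i 1) * ((i : C(K, ℝ)) x) := by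
      simp [b₀, Submodule.coe_sum, Finset.sum_apply, smul_eq_mul, mul_comm]
    rw [hcoe, show (∑ i ∈ I, ℓ (Pi.single i 1) * ((i : C(K, ℝ)) x)) = ℓ (Φ x) from
      (hI (Φ x)).symm]
    field_simp
  have hA : ℓ (Φ x) + (f x + -ε) * a < u := by
    have := hLu _ (Set.mem_range_self (f := Ψ (-ε)) x)
    rwa [show Ψ (-ε) x = (Φ x, f x + -ε) from rfl, hL_split] at this
  have hBx : v < ℓ (Φ x) + (f x + ε) * a := by
    have := hLv _ (Set.mem_range_self (f := Ψ ε) x)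
    rwa [show Ψ ε x = (Φ x, f x + ε) from rfl, hL_split] at this
  have h3 : f x - ε ≤ (u - ℓ (Φ x)) / a := by
    rw [le_div_iff₀ ha]
    nlinarith
  have h4 : (u - ℓ (Φ x)) / a ≤ f x + ε := by
    rw [div_le_iff₀ ha]
    nlinarith
  rw [key, abs_le]
  constructor <;> linarith
end
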